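/- Let k ≥ 2 and let α be the dominant root of Ψ_k(x). If r > 1 is an integer with r − 1 < 2^(k/2), then (2α − 1) f_k(α) α^(r−1) = 3·2^(r−2) + 3·2^(r−1)·η + δ/2 + η·δ for some real numbers δ, η with |δ| < 2^(r+2)/2^(k/2) and |η| < 2k/2^k. -/

import Mathlib

/-!
Summing the geometric series turns the root equation into `α ^ k * (2 - α) = 1`. Since
`α ^ k > k`, this gives `k (2 - α) < 1`, and Bernoulli's inequality for `(α / 2) ^ k` then
improves it to `2 - α < 2 / 2 ^ k`. Hence `α ^ (r - 1)` is within `(r - 1) 2 ^ (r - 2) (2 - α)`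
of `2 ^ (r - 1)`, and `(2α - 1) f_k(α)` is within `O(k / 2 ^ k)` of `3 / 2`; the claimed identity
is the product of these two approximations.
-/

open Finset

theorem pow_mul_two_sub_eq_one {R : Type*} [CommRing R] {α : R} {k : ℕ}
    (hroot : α ^ k = ∑ i ∈ range k, α ^ i) : α ^ k * (2 - α) = 1 := by
  linear_combination (1 - α) * hroot - geom_sum_mul α k

theorem natCast_lt_geom_sum {R : Type*} [Semiring R] [PartialOrder R] [IsStrictOrderedRing R]
    {α : R} (hα : 1 < α) {k : ℕ} (hk : 2 ≤ k) : (k : R) < ∑ i ∈ range k, α ^ i := by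
  calc (k : R) = ∑ _i ∈ range k, 1 := by simp
    _ < ∑ i ∈ range k, α ^ i :=
      sum_lt_sum (fun i _ ↦ one_le_pow₀ hα.le) ⟨1, mem_range.mpr hk, by simpa using hα⟩

theorem four_mul_add_one_le_three_mul_two_pow {m : ℕ} (hm : 2 ≤ m) :
    4 * (m + 1) ≤ 3 * 2 ^ m := by
  induction m, hm using Nat.le_induction with
  | base => norm_num
  | succ n _ ih => rw [pow_succ]; omega

section DominantRoot

variable {k : ℕ} {α : ℝ}

theorem lt_two_of_pow_eq_geom_sum (hα : 0 < α) (hroot : α ^ k = ∑ i ∈ range k, α ^ i) :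
    α < 2 := by
  have := pow_mul_two_sub_eq_one hroot
  nlinarith [pow_pos hα k]

theorem two_sub_lt_two_div_two_pow (hk : 2 ≤ k) (hα : 1 < α)
    (hroot : α ^ k = ∑ i ∈ range k, α ^ i) : 2 - α < 2 / 2 ^ k := by
  have hkey := pow_mul_two_sub_eq_one hroot
  have hε : 0 < 2 - α := by linarith [lt_two_of_pow_eq_geom_sum (by linarith) hroot]
  have hkε : k * (2 - α) < 1 := by
    rw [← hkey, hroot]
    exact mul_lt_mul_of_pos_right (natCast_lt_geom_sum hα hk) hε
  have hbern : 1 + k * (-(2 - α) / 2) ≤ (α / 2) ^ k := by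
    have := one_add_mul_le_pow (a := -(2 - α) / 2) (by linarith) k
    rwa [show 1 + -(2 - α) / 2 = α / 2 by ring] at this
  have h2k : 2 ^ k < 2 * α ^ k := by
    rw [div_pow, le_div_iff₀ (by positivity)] at hbern
    nlinarith [pow_pos (two_pos (α := ℝ)) k]
  rw [lt_div_iff₀ (by positivity)]
  nlinarith [mul_lt_mul_of_pos_left h2k hε]

theorem half_lt_two_add_mul_sub_two (hk : 2 ≤ k) (hε : 2 - α < 2 / 2 ^ k) :
    1 / 2 < 2 + (k + 1) * (α - 2) := by
  have hcast : (4 : ℝ) * (k + 1) ≤ 3 * 2 ^ k := by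
    exact_mod_cast four_mul_add_one_le_three_mul_two_pow hk
  have : (k + 1 : ℝ) * (2 - α) < (k + 1) * (2 / 2 ^ k) := by gcongr
  have : (k + 1 : ℝ) * (2 / 2 ^ k) ≤ 3 / 2 := by
    rw [← mul_div_assoc, div_le_iff₀ (by positivity)]
    linarith
  linarith

theorem abs_pow_sub_two_pow_lt (hα0 : 0 ≤ α) (hα2 : α ≤ 2) (hε : 2 - α < 2 / 2 ^ k)
    {n : ℕ} (hn : (n + 1 : ℝ) < 2 ^ ((k : ℝ) / 2)) :
    |α ^ (n + 1) - 2 ^ (n + 1)| < 2 ^ (n + 1) / 2 ^ ((k : ℝ) / 2) := by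
  set T : ℝ := 2 ^ ((k : ℝ) / 2)
  have hT : 0 < T := by positivity
  have hTT : T ^ 2 = 2 ^ k := by
    rw [← Real.rpow_natCast, ← Real.rpow_mul zero_le_two]
    norm_num
  have hmean : |α ^ (n + 1) - 2 ^ (n + 1)| ≤ (2 - α) * (n + 1) * 2 ^ n := by
    have := abs_pow_sub_pow_le α 2 (n + 1)
    rwa [abs_sub_comm α 2, abs_of_nonneg (sub_nonneg.2 hα2), abs_of_nonneg hα0, abs_two,
      max_eq_right hα2, Nat.add_sub_cancel, Nat.cast_succ] at this
  rw [lt_div_iff₀ hT]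
  calc |α ^ (n + 1) - 2 ^ (n + 1)| * T ≤ (2 - α) * (n + 1) * 2 ^ n * T := by gcongr
    _ < 2 / 2 ^ k * T * 2 ^ n * T := by gcongr
    _ = 2 ^ (n + 1) := by field_simp; rw [hTT]; ring

theorem abs_two_mul_sub_one_mul_div_sub_three_halves_lt (hk : 2 ≤ k) (hε0 : 0 < 2 - α)
    (hε : 2 - α < 2 / 2 ^ k) :
    |(2 * α - 1) * ((α - 1) / (2 + (k + 1) * (α - 2))) - 3 / 2| < 6 * k / 2 ^ k := by
  set D := 2 + (k + 1 : ℝ) * (α - 2)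
  have hD : 1 / 2 < D := half_lt_two_add_mul_sub_two hk hε
  have hkR : (2 : ℝ) ≤ k := by exact_mod_cast hk
  have hid : (2 * α - 1) * ((α - 1) / D) - 3 / 2
      = (2 - α) * (3 * k - 7 + 4 * (2 - α)) / (2 * D) := by
    field_simp
    ring
  have hnum : |3 * k - 7 + 4 * (2 - α)| ≤ 3 * k - 5 := by
    have : 2 - α ≤ 1 / 2 := by
      have : (2 : ℝ) / 2 ^ k ≤ 2 / 2 ^ 2 := by gcongr; norm_num
      linarith
    rw [abs_le]; constructor <;> linarith
  rw [hid, abs_div, abs_mul, abs_of_pos hε0, abs_of_pos (show (0 : ℝ) < 2 * D by linarith),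
    div_lt_div_iff₀ (by linarith) (by positivity)]
  calc (2 - α) * |3 * k - 7 + 4 * (2 - α)| * 2 ^ k ≤ (2 - α) * 2 ^ k * (3 * k - 5) := by
        rw [mul_right_comm]; gcongr
    _ < 2 * (3 * k - 5) := by
        gcongr
        · linarith
        · rwa [lt_div_iff₀ (by positivity)] at hε
    _ < 6 * k * (2 * D) := by nlinarith

end DominantRoot

theorem lucas_dominant_term_estimate_general (k : ℕ) (hk : 2 ≤ k)
    (α : ℝ) (hα1 : 1 < α)
    (hroot : α ^ k = ∑ i ∈ Finset.range k, α ^ i)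
    (r : ℕ) (hr : 1 < r) (hrk : (r : ℝ) - 1 < (2 : ℝ) ^ ((k : ℝ) / 2)) :
    ∃ δ η : ℝ,
      (2 * α - 1) * ((α - 1) / (2 + (k + 1) * (α - 2))) * α ^ (r - 1)
          = 3 * 2 ^ (r - 2) + 3 * 2 ^ (r - 1) * η + δ / 2 + η * δ ∧
      |δ| < 2 ^ (r + 2) / (2 : ℝ) ^ ((k : ℝ) / 2) ∧
      |η| < 2 * k / 2 ^ k := by
  have hα2 : α < 2 := lt_two_of_pow_eq_geom_sum (by linarith) hroot
  have hε : 2 - α < 2 / 2 ^ k := two_sub_lt_two_div_two_pow hk hα1 hroot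
  obtain ⟨n, rfl⟩ : ∃ n, r = n + 2 := ⟨r - 2, by omega⟩
  set c := (2 * α - 1) * ((α - 1) / (2 + (k + 1) * (α - 2)))
  refine ⟨3 * (α ^ (n + 1) - 2 ^ (n + 1)), (c - 3 / 2) / 3, ?_, ?_, ?_⟩
  · -- the right-hand side is `(3 / 2 + 3 η) * (2 ^ (r - 1) + δ / 3)`
    simp only [Nat.add_sub_cancel, Nat.add_succ_sub_one]
    ring
  · have hn : (n + 1 : ℝ) < 2 ^ ((k : ℝ) / 2) := by push_cast at hrk; linarith
    have hpow := abs_pow_sub_two_pow_lt (by linarith) hα2.le hε hn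
    rw [abs_mul, abs_of_pos three_pos]
    calc 3 * |α ^ (n + 1) - 2 ^ (n + 1)| < 3 * (2 ^ (n + 1) / 2 ^ ((k : ℝ) / 2)) := by gcongr
      _ ≤ 2 ^ (n + 2 + 2) / 2 ^ ((k : ℝ) / 2) := by
        rw [← mul_div_assoc]; gcongr; ring_nf; gcongr; norm_num
  · rw [abs_div, abs_of_pos (show (0 : ℝ) < 3 by norm_num)]
    calc |c - 3 / 2| / 3 < 6 * k / 2 ^ k / 3 := by
          gcongr; exact abs_two_mul_sub_one_mul_div_sub_three_halves_lt hk (by linarith) hε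
      _ = 2 * k / 2 ^ k := by ring

/-- For k ≥ 2 and an integer r > 1 with r − 1 < 2^(k/2), one has
    (2α − 1) f_k(α) α^(r−1) = 3·2^(r−2) + 3·2^(r−1)·η + δ/2 + η·δ for some real
    δ, η with |δ| < 2^(r+2)/2^(k/2) and |η| < 2k/2^k. -/
theorem lucas_dominant_term_estimate (k : ℕ) (hk : 2 ≤ k)
    (α : ℝ) (hα1 : 1 < α) (hα2 : α < 2)
    (hroot : α ^ k = ∑ i ∈ Finset.range k, α ^ i)
    (r : ℕ) (hr : 1 < r) (hrk : (r : ℝ) - 1 < (2 : ℝ) ^ ((k : ℝ) / 2)) :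
    ∃ δ η : ℝ,
      (2 * α - 1) * ((α - 1) / (2 + (k + 1) * (α - 2))) * α ^ (r - 1)
          = 3 * 2 ^ (r - 2) + 3 * 2 ^ (r - 1) * η + δ / 2 + η * δ ∧
      |δ| < 2 ^ (r + 2) / (2 : ℝ) ^ ((k : ℝ) / 2) ∧
      |η| < 2 * k / 2 ^ k :=
  lucas_dominant_term_estimate_general k hk α hα1 hroot r hr hrk
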